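/- At states with fully informed information perspective, the accessibility relation ⊴_a is Euclidean (Z ⊴_a X and Z ⊴_a Y imply Y ⊴_a X), and hence negative introspection G, Z ⊨ ¬K_a φ → K_a ¬K_a φ holds. -/
import Mathlib


namespace KOS

/-- A word over the agents: length ≥ 2 and no adjacent repetitions. -/
def IsWord {Ag : Type} (w : List Ag) : Prop := 2 ≤ w.length ∧ w.Chain' (· ≠ ·)

/-- An information perspective is a set of words over `Ag` of length ≥ 2
without adjacent repetitions. -/
def InfPersp {Ag : Type} (I : Set (List Ag)) : Prop := ∀ w ∈ I, IsWord w

/-- The perspective shift `I[a]`. -/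
def shift {Ag : Type} (I : Set (List Ag)) (a : Ag) : Set (List Ag) :=
  {w | IsWord w ∧ a :: w ∈ I} ∪ {w | w ∈ I ∧ ∃ w', w = a :: w'}

/-- `I_a`: the agents whose strategies `a` is informed about (including `a`). -/
def Ia {Ag : Type} (I : Set (List Ag)) (a : Ag) : Set Ag :=
  {b | [a, b] ∈ I} ∪ {a}

/-- A truthful information perspective: closed under suffixes. -/
def Truthful {Ag : Type} (I : Set (List Ag)) : Prop :=
  ∀ (a : Ag) (w : List Ag), IsWord w → a :: w ∈ I → w ∈ I

/-- Concurrent game structure. -/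
structure CGS (PV Ag Ac V : Type) where
  E : V → (Ag → Ac) → V
  label : V → Set PV
  simV : Ag → V → V → Prop
  simAc : Ag → Ac → Ac → Prop
  eqvV : ∀ a, Equivalence (simV a)
  eqvAc : ∀ a, Equivalence (simAc a)

/-- Histories: alternating sequences of positions and joint actions. -/
inductive Hist (Ag Ac V : Type) where
  | init : V → Hist Ag Ac V
  | step : Hist Ag Ac V → (Ag → Ac) → V → Hist Ag Ac V

namespace Hist
def last {Ag Ac V : Type} : Hist Ag Ac V → V
  | init v => v
  | step _ _ v => v
end Hist

variable {PV Ag Ac V : Type}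

/-- Validity of a history w.r.t. the transition function. -/
def CGS.Valid (G : CGS PV Ag Ac V) : Hist Ag Ac V → Prop
  | .init _ => True
  | .step ρ α v => G.Valid ρ ∧ v = G.E ρ.last α

/-- Indistinguishability of histories for agent `a` (synchronous perfect recall). -/
def CGS.simH (G : CGS PV Ag Ac V) (a : Ag) : Hist Ag Ac V → Hist Ag Ac V → Prop
  | .init v, .init v' => G.simV a v v'
  | .step ρ α v, .step ρ' α' v' =>
      G.simH a ρ ρ' ∧ (∀ b, G.simAc a (α b) (α' b)) ∧ G.simV a v v'
  | _, _ => False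

/-- A strategy maps histories to actions. -/
def Strategy (Ag Ac V : Type) := Hist Ag Ac V → Ac

/-- An assignment maps agents to strategies. -/
def Assignment (Ag Ac V : Type) := Ag → Strategy Ag Ac V

/-- A history is consistent with an assignment for a set `X` of agents. -/
def Consistent (χ : Assignment Ag Ac V) (X : Set Ag) : Hist Ag Ac V → Prop
  | .init _ => True
  | .step ρ α _ => Consistent χ X ρ ∧ ∀ b ∈ X, α b = χ b ρ

/-- Indistinguishability of assignments for agent `a` under perspective `I`. -/
def assignSim (I : Set (List Ag)) (a : Ag) (χ χ' : Assignment Ag Ac V) : Prop :=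
  ∀ b ∈ Ia I a, χ b = χ' b

/-- A state: assignment, information perspective, history. -/
structure State (Ag Ac V : Type) where
  χ : Assignment Ag Ac V
  I : Set (List Ag)
  ρ : Hist Ag Ac V

/-- `a`-consistency of a state. -/
def State.aCons (Z : State Ag Ac V) (a : Ag) : Prop := Consistent Z.χ (Ia Z.I a) Z.ρ

/-- Accessibility of states for agent `a`. -/
def CGS.Acc (G : CGS PV Ag Ac V) (a : Ag) (Z Z' : State Ag Ac V) : Prop :=
  InfPersp Z.I ∧ InfPersp Z'.I ∧ G.Valid Z.ρ ∧ G.Valid Z'.ρ ∧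
  assignSim Z.I a Z.χ Z'.χ ∧ shift Z.I a ⊆ Z'.I ∧ G.simH a Z.ρ Z'.ρ ∧
  Z.aCons a ∧ Z'.aCons a

/-- One-step continuation of a history under an assignment. -/
def CGS.nextH (G : CGS PV Ag Ac V) (χ : Assignment Ag Ac V) (ρ : Hist Ag Ac V) :
    Hist Ag Ac V :=
  .step ρ (fun b => χ b ρ) (G.E ρ.last (fun b => χ b ρ))

/-- Formulas of the language `L^C`. -/
inductive Form (PV Ag : Type) where
  | atom : PV → Form PV Ag
  | bot : Form PV Ag
  | imp : Form PV Ag → Form PV Ag → Form PV Ag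
  | know : Ag → Form PV Ag → Form PV Ag
  | common : Set Ag → Form PV Ag → Form PV Ag
  | next : Form PV Ag → Form PV Ag

def Form.neg {PV Ag : Type} (φ : Form PV Ag) : Form PV Ag := .imp φ .bot

/-- Truth of a formula at a state in a concurrent game structure. -/
def CGS.Truth (G : CGS PV Ag Ac V) : Form PV Ag → State Ag Ac V → Prop
  | .atom p, Z => p ∈ G.label Z.ρ.last
  | .bot, _ => False
  | .imp φ ψ, Z => G.Truth φ Z → G.Truth ψ Z
  | .know a φ, Z => ∀ Z', G.Acc a Z Z' → G.Truth φ Z'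
  | .common S φ, Z =>
      ∀ Z', Relation.TransGen (fun X Y => ∃ x ∈ S, G.Acc x X Y) Z Z' → G.Truth φ Z'
  | .next φ, Z => G.Truth φ ⟨Z.χ, Z.I, G.nextH Z.χ Z.ρ⟩

/-- K-depth of a formula. -/
def kd {PV Ag : Type} : Form PV Ag → ℕ
  | .atom _ => 0
  | .bot => 0
  | .imp φ ψ => max (kd φ) (kd ψ)
  | .know _ φ => kd φ + 1
  | .common _ φ => kd φ + 1
  | .next φ => kd φ

/-- `L`-formulas: no common knowledge operator. -/
def NoCommon {PV Ag : Type} : Form PV Ag → Prop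
  | .atom _ => True
  | .bot => True
  | .imp φ ψ => NoCommon φ ∧ NoCommon ψ
  | .know _ φ => NoCommon φ
  | .common _ _ => False
  | .next φ => NoCommon φ

/-- Restriction of a set of words to words of length at most `n`. -/
def restr {Ag : Type} (X : Set (List Ag)) (n : ℕ) : Set (List Ag) :=
  {w ∈ X | w.length ≤ n}

section Aux
variable {PV Ag Ac V : Type}

lemma simH_symm (G : CGS PV Ag Ac V) (a : Ag) :
    ∀ ρ ρ' : Hist Ag Ac V, G.simH a ρ ρ' → G.simH a ρ' ρ := by
  intro ρ
  induction ρ with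
  | init v =>
    intro ρ' h
    cases ρ' with
    | init v' => exact (G.eqvV a).symm h
    | step _ _ _ => exact h.elim
  | step ρ α v ih =>
    intro ρ' h
    cases ρ' with
    | init _ => exact h.elim
    | step ρ' α' v' =>
      obtain ⟨h1, h2, h3⟩ := h
      exact ⟨ih ρ' h1, fun b => (G.eqvAc a).symm (h2 b), (G.eqvV a).symm h3⟩

lemma simH_trans (G : CGS PV Ag Ac V) (a : Ag) :
    ∀ ρ1 ρ2 ρ3 : Hist Ag Ac V, G.simH a ρ1 ρ2 → G.simH a ρ2 ρ3 → G.simH a ρ1 ρ3 := by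
  intro ρ1
  induction ρ1 with
  | init v =>
    intro ρ2 ρ3 h12 h23
    cases ρ2 with
    | init v2 =>
      cases ρ3 with
      | init v3 => exact (G.eqvV a).trans h12 h23
      | step _ _ _ => exact h23.elim
    | step _ _ _ => exact h12.elim
  | step ρ α v ih =>
    intro ρ2 ρ3 h12 h23
    cases ρ2 with
    | init _ => exact h12.elim
    | step ρ2 α2 v2 =>
      cases ρ3 with
      | init _ => exact h23.elim
      | step ρ3 α3 v3 =>
        obtain ⟨a1, b1, c1⟩ := h12
        obtain ⟨a2, b2, c2⟩ := h23
        exact ⟨ih ρ2 ρ3 a1 a2, fun b => (G.eqvAc a).trans (b1 b) (b2 b),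
          (G.eqvV a).trans c1 c2⟩

lemma shift_full (a : Ag) :
    {w : List Ag | IsWord w} ⊆ shift {w : List Ag | IsWord w} a := by
  intro w hw
  have hne : w ≠ [] := by rintro rfl; simp [IsWord] at hw
  obtain ⟨b, t, rfl⟩ := List.exists_cons_of_ne_nil hne
  by_cases hb : b = a
  · subst hb
    exact Or.inr ⟨hw, t, rfl⟩
  · refine Or.inl ⟨hw, ?_, ?_⟩
    · have := hw.1; simp only [List.length_cons] at this ⊢; omega
    · exact List.isChain_cons_cons.mpr ⟨fun h => hb h.symm, hw.2⟩

end Aux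

end KOS

open KOS in
/-- at fully informed states `⊴_a` is Euclidean, and hence negative
introspection `¬K_a φ → K_a ¬K_a φ` holds. -/
theorem stmt12 {PV Ag Ac V : Type} [Fintype Ag] [Fintype Ac] [Fintype V]
    (G : CGS PV Ag Ac V) (a : Ag) :
    (∀ Z X Y : State Ag Ac V, Z.I = {w : List Ag | IsWord w} →
      G.Acc a Z X → G.Acc a Z Y → G.Acc a Y X) ∧
    (∀ (φ : Form PV Ag) (Z : State Ag Ac V), Z.I = {w : List Ag | IsWord w} →
      G.Truth (.imp (Form.neg (.know a φ)) (.know a (Form.neg (.know a φ)))) Z) := by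
  have euclid : ∀ Z X Y : State Ag Ac V, Z.I = {w : List Ag | IsWord w} →
      G.Acc a Z X → G.Acc a Z Y → G.Acc a Y X := by
    intro Z X Y hfull hZX hZY
    obtain ⟨_, hIX, _, hVX, hsX, hshX, hHX, hZc, hXc⟩ := hZX
    obtain ⟨_, hIY, hVZ, hVY, hsY, hshY, hHY, _, hYc⟩ := hZY
    have hXfull : X.I = {w : List Ag | IsWord w} := by
      apply Set.Subset.antisymm (fun w hw => hIX w hw)
      intro w hw
      apply hshX
      rw [hfull]
      exact shift_full a hw
    have hYfull : Y.I = {w : List Ag | IsWord w} := by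
      apply Set.Subset.antisymm (fun w hw => hIY w hw)
      intro w hw
      apply hshY
      rw [hfull]
      exact shift_full a hw
    refine ⟨hIY, hIX, hVY, hVX, ?_, ?_, ?_, hYc, hXc⟩
    · intro b hb
      have hb' : b ∈ Ia Z.I a := by rw [hfull, ← hYfull]; exact hb
      rw [← hsY b hb', hsX b hb']
    · intro w hw
      rw [hXfull]
      rcases hw with ⟨hw1, _⟩ | ⟨hw, _⟩
      · exact hw1
      · rw [hYfull] at hw; exact hw
    · exact simH_trans G a Y.ρ Z.ρ X.ρ (simH_symm G a Z.ρ Y.ρ hHY) hHX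
  refine ⟨euclid, ?_⟩
  intro φ Z hfull hneg Y hZY hKY
  apply hneg
  intro X hZX
  exact hKY X (euclid Z X Y hfull hZX hZY)
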